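/- Let I be a finite nonempty set of trips with t : I → ℝ, and let R be a relation on I such that R(i,j) implies t(i) < t(j). For every natural number k with 1 ≤ k ≤ |I|: there exists a partition of I into k trip chains (nonempty sequences of distinct trips in which every consecutive pair (i,j) satisfies R(i,j)) if and only if there exists a link set E ⊆ R (a set of ordered pairs in which every trip occurs at most once as a first coordinate and at most once as a second coordinate) with |E| = |I| − k. Consequently, the minimum number of trip chains needed to partition I equals |I| minus the maximum cardinality of a link set E ⊆ R. -/

import Mathlib

/-- A partition of the trip set into `k` trip chains: each chain is a nonempty list of
distinct trips whose consecutive pairs satisfy the compatibility relation `R`, and every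
trip belongs to exactly one chain. -/
def IsChainPartition {I : Type*} (R : I → I → Prop) (k : ℕ) (ch : Fin k → List I) : Prop :=
  (∀ a : Fin k, ch a ≠ [] ∧ (ch a).Nodup ∧ (ch a).Chain' R) ∧ ∀ i : I, ∃! a : Fin k, i ∈ ch a

/-- A link set for `R`: a set of compatible ordered trip pairs in which every trip occurs at
most once as a first coordinate and at most once as a second coordinate. -/
def IsLinkSet {I : Type*} (R : I → I → Prop) (E : Finset (I × I)) : Prop :=
  (∀ p ∈ E, R p.1 p.2) ∧
  (∀ p ∈ E, ∀ q ∈ E, p.1 = q.1 → p = q) ∧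
  (∀ p ∈ E, ∀ q ∈ E, p.2 = q.2 → p = q)

/-!
The consecutive pairs of the chains of a partition into `k` chains form a link set with
`|I| - k` links, a chain `c` contributing `|c| - 1` of them. Conversely, start from the partition
into singletons and add the links of a link set one at a time. Since every trip has at most one
outgoing and one incoming link, a new link `(i, j)` goes from the last trip of a chain to the first
trip of a chain, and these chains are distinct because `t` increases strictly along a chain; so they
can be concatenated, and each link lowers the number of chains by one.
-/

namespace List

variable {α : Type*}

@[simp]
theorem consecutivePairs_singleton (a : α) : [a].consecutivePairs = [] := rfl

@[simp]
theorem consecutivePairs_cons_cons (a b : α) (l : List α) :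
    (a :: b :: l).consecutivePairs = (a, b) :: (b :: l).consecutivePairs := rfl

theorem map_fst_consecutivePairs : ∀ l : List α, l.consecutivePairs.map Prod.fst = l.dropLast
  | [] | [_] => rfl
  | a :: b :: l => by simp [map_fst_consecutivePairs (b :: l)]

theorem map_snd_consecutivePairs (l : List α) : l.consecutivePairs.map Prod.snd = l.tail :=
  map_snd_zip (by simp)

theorem map_fst_flatMap_consecutivePairs (L : List (List α)) :
    (L.flatMap consecutivePairs).map Prod.fst = L.flatMap dropLast := by
  simp only [map_flatMap, map_fst_consecutivePairs]

theorem map_snd_flatMap_consecutivePairs (L : List (List α)) :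
    (L.flatMap consecutivePairs).map Prod.snd = L.flatMap tail := by
  simp only [map_flatMap, map_snd_consecutivePairs]

theorem consecutivePairs_concat_append_cons (a b : α) (l₂ : List α) :
    ∀ l₁ : List α, (l₁ ++ [a] ++ b :: l₂).consecutivePairs =
      (l₁ ++ [a]).consecutivePairs ++ (a, b) :: (b :: l₂).consecutivePairs
  | [] => rfl
  | [_] => rfl
  | c :: d :: l₁ => by
    have ih := consecutivePairs_concat_append_cons a b l₂ (d :: l₁)
    simp only [cons_append, consecutivePairs_cons_cons] at ih ⊢
    rw [ih]

theorem IsChain.rel_of_mem_consecutivePairs {R : α → α → Prop} :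
    ∀ {l : List α}, l.IsChain R → ∀ p ∈ l.consecutivePairs, R p.1 p.2
  | [], _, _, hp | [_], _, _, hp => by simp at hp
  | a :: b :: l, hl, p, hp => by
    rw [isChain_cons_cons] at hl
    rcases mem_cons.1 (consecutivePairs_cons_cons a b l ▸ hp) with rfl | hp
    · exact hl.1
    · exact hl.2.rel_of_mem_consecutivePairs p hp

theorem flatMap_dropLast_sublist_flatten (L : List (List α)) : L.flatMap dropLast <+ L.flatten := by
  induction L with
  | nil => simp
  | cons c L ih => simpa using (dropLast_sublist c).append ih

theorem flatMap_tail_sublist_flatten (L : List (List α)) : L.flatMap tail <+ L.flatten := by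
  induction L with
  | nil => simp
  | cons c L ih => simpa using (tail_sublist c).append ih

theorem length_flatMap_dropLast_add_length {L : List (List α)} (hL : ∀ c ∈ L, c ≠ []) :
    (L.flatMap dropLast).length + L.length = L.flatten.length := by
  induction L with
  | nil => simp
  | cons c L ih =>
    have hc : 0 < c.length := length_pos_iff.2 (hL c mem_cons_self)
    simp only [flatMap_cons, flatten_cons, length_append, length_dropLast, length_cons]
    have := ih fun d hd ↦ hL d (mem_cons_of_mem c hd)
    omega

theorem exists_eq_append_singleton_of_notMem_dropLast {l : List α} {a : α} (ha : a ∈ l)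
    (ha' : a ∉ l.dropLast) : ∃ l₀, l = l₀ ++ [a] := by
  have hl : l ≠ [] := ne_nil_of_mem ha
  rw [← dropLast_append_getLast hl] at ha ⊢
  rcases mem_append.1 ha with h | h
  · exact absurd h ha'
  · exact ⟨_, by rw [mem_singleton.1 h]⟩

theorem exists_eq_cons_of_notMem_tail {l : List α} {a : α} (ha : a ∈ l) (ha' : a ∉ l.tail) :
    ∃ l₀, l = a :: l₀ := by
  obtain _ | ⟨b, l₀⟩ := l
  · simp at ha
  · rcases mem_cons.1 ha with rfl | h
    · exact ⟨l₀, rfl⟩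
    · exact absurd h ha'

theorem IsChain.le_of_mem_cons {β : Type*} [Preorder β] {R : α → α → Prop} {f : α → β}
    (hf : ∀ a b, R a b → f a < f b) {a b : α} {l : List α} (hl : (a :: l).IsChain R)
    (hb : b ∈ a :: l) : f a ≤ f b := by
  have : ((a :: l).map f).Pairwise (· < ·) :=
    isChain_iff_pairwise.1 (isChain_map f |>.2 (hl.imp hf))
  rcases mem_cons.1 hb with rfl | hb
  · exact le_rfl
  · exact (pairwise_cons.1 this).1 _ (mem_map_of_mem hb) |>.le

end List

theorem IsLinkSet.subset {I : Type*} {R : I → I → Prop} {E E' : Finset (I × I)}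
    (hE : IsLinkSet R E) (h : E' ⊆ E) : IsLinkSet R E' :=
  ⟨fun p hp ↦ hE.1 p (h hp), fun p hp q hq ↦ hE.2.1 p (h hp) q (h hq),
    fun p hp q hq ↦ hE.2.2 p (h hp) q (h hq)⟩

theorem IsLinkSet.card_le {I : Type*} [Fintype I] {R : I → I → Prop} {E : Finset (I × I)}
    (hE : IsLinkSet R E) : E.card ≤ Fintype.card I := by
  classical
  rw [← Finset.card_image_of_injOn fun p hp q hq ↦ hE.2.1 p hp q hq]
  exact Finset.card_le_univ _

open List

section ChainCover

variable {I : Type*} {R : I → I → Prop} {L : List (List I)}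

-- A chain partition indexed by a list rather than by `Fin k`: merging two chains then only
-- rearranges the list up to `List.Perm`.
variable (R) in
def IsChainCover (L : List (List I)) : Prop :=
  (∀ c ∈ L, c ≠ [] ∧ c.IsChain R) ∧ L.flatten.Nodup ∧ ∀ i, i ∈ L.flatten

theorem isChainPartition_iff_isChainCover_ofFn {k : ℕ} (ch : Fin k → List I) :
    IsChainPartition R k ch ↔ IsChainCover R (ofFn ch) := by
  simp only [IsChainCover, nodup_flatten, pairwise_ofFn, mem_flatten, mem_ofFn]
  constructor
  · rintro ⟨hch, hmem⟩
    refine ⟨?_, ⟨?_, fun a b hab i hia hib ↦ ?_⟩, fun i ↦ ?_⟩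
    · rintro _ ⟨a, rfl⟩
      exact ⟨(hch a).1, (hch a).2.2⟩
    · rintro _ ⟨a, rfl⟩
      exact (hch a).2.1
    · exact hab.ne ((hmem i).unique hia hib)
    · obtain ⟨a, hia, -⟩ := hmem i
      exact ⟨_, ⟨a, rfl⟩, hia⟩
  · rintro ⟨hch, ⟨hnd, hdisj⟩, hmem⟩
    refine ⟨fun a ↦ ⟨(hch _ ⟨a, rfl⟩).1, hnd _ ⟨a, rfl⟩, (hch _ ⟨a, rfl⟩).2⟩, fun i ↦ ?_⟩
    obtain ⟨_, ⟨a, rfl⟩, hia⟩ := hmem i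
    refine ⟨a, hia, fun b hib ↦ ?_⟩
    rcases lt_trichotomy a b with hab | rfl | hab
    · exact (hdisj hab hia hib).elim
    · rfl
    · exact (hdisj hab hib hia).elim

theorem exists_isChainPartition_iff {k : ℕ} :
    (∃ ch : Fin k → List I, IsChainPartition R k ch) ↔
      ∃ L : List (List I), IsChainCover R L ∧ L.length = k := by
  constructor
  · rintro ⟨ch, hch⟩
    exact ⟨ofFn ch, (isChainPartition_iff_isChainCover_ofFn ch).1 hch, length_ofFn⟩
  · rintro ⟨L, hL, rfl⟩
    exact ⟨L.get, (isChainPartition_iff_isChainCover_ofFn _).2 (by rwa [ofFn_get])⟩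

theorem isChainCover_singletons [Fintype I] :
    IsChainCover R (Finset.univ.toList.map fun i : I ↦ [i]) := by
  simp only [IsChainCover, ← flatMap_def, flatMap_singleton']
  exact ⟨by simp, Finset.nodup_toList _, by simp⟩

theorem IsChainCover.perm {L' : List (List I)} (h : IsChainCover R L) (hL : L ~ L') :
    IsChainCover R L' :=
  ⟨fun c hc ↦ h.1 c (hL.mem_iff.2 hc), hL.flatten.nodup_iff.1 h.2.1,
    fun i ↦ hL.flatten.mem_iff.1 (h.2.2 i)⟩

theorem IsChainCover.merge {A B : List I} {i j : I}
    (h : IsChainCover R ((A ++ [i]) :: (j :: B) :: L)) (hij : R i j) :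
    IsChainCover R ((A ++ [i] ++ j :: B) :: L) := by
  obtain ⟨hch, hnd, hmem⟩ := h
  have hflat : ((A ++ [i] ++ j :: B) :: L).flatten = ((A ++ [i]) :: (j :: B) :: L).flatten := by
    simp
  refine ⟨?_, hflat ▸ hnd, hflat ▸ hmem⟩
  rintro c (_ | ⟨_, hc⟩)
  · refine ⟨by simp, (hch _ mem_cons_self).2.append (hch _ (mem_cons_of_mem _ mem_cons_self)).2 ?_⟩
    simpa using hij
  · exact hch c (mem_cons_of_mem _ (mem_cons_of_mem _ hc))

theorem IsChainCover.nodup_map_fst_links (h : IsChainCover R L) :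
    ((L.flatMap consecutivePairs).map Prod.fst).Nodup := by
  rw [map_fst_flatMap_consecutivePairs]
  exact h.2.1.sublist (flatMap_dropLast_sublist_flatten L)

theorem IsChainCover.isLinkSet [DecidableEq I] (h : IsChainCover R L) :
    IsLinkSet R (L.flatMap consecutivePairs).toFinset := by
  have hsnd : ((L.flatMap consecutivePairs).map Prod.snd).Nodup := by
    rw [map_snd_flatMap_consecutivePairs]
    exact h.2.1.sublist (flatMap_tail_sublist_flatten L)
  simp only [IsLinkSet, mem_toFinset]
  refine ⟨fun p hp ↦ ?_, inj_on_of_nodup_map h.nodup_map_fst_links, inj_on_of_nodup_map hsnd⟩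
  obtain ⟨c, hc, hp⟩ := mem_flatMap.1 hp
  exact (h.1 c hc).2.rel_of_mem_consecutivePairs p hp

theorem IsChainCover.card_links_add_length [Fintype I] [DecidableEq I]
    (h : IsChainCover R L) :
    (L.flatMap consecutivePairs).toFinset.card + L.length = Fintype.card I := by
  have hflat : L.flatten.length = Fintype.card I := by
    rw [← toFinset_card_of_nodup h.2.1, Finset.eq_univ_of_forall fun i ↦ mem_toFinset.2 (h.2.2 i),
      Finset.card_univ]
  rw [toFinset_card_of_nodup (h.nodup_map_fst_links.of_map _), ← length_map Prod.fst,
    map_fst_flatMap_consecutivePairs, length_flatMap_dropLast_add_length fun c hc ↦ (h.1 c hc).1,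
    hflat]

-- `hi` and `hj` say that `i` is the last trip of its chain and `j` the first of its chain.
theorem IsChainCover.exists_merge {β : Type*} [Preorder β] {f : I → β}
    (hf : ∀ a b, R a b → f a < f b) (h : IsChainCover R L) {i j : I} (hij : R i j)
    (hi : i ∉ L.flatMap dropLast) (hj : j ∉ L.flatMap tail) :
    ∃ L' : List (List I), IsChainCover R L' ∧ L'.length + 1 = L.length ∧
      ∀ p ∈ L'.flatMap consecutivePairs, p = (i, j) ∨ p ∈ L.flatMap consecutivePairs := by
  classical
  obtain ⟨A, hA, hiA⟩ := mem_flatten.1 (h.2.2 i)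
  obtain ⟨B, hB, hjB⟩ := mem_flatten.1 (h.2.2 j)
  obtain ⟨A, rfl⟩ := exists_eq_append_singleton_of_notMem_dropLast hiA
    fun h' ↦ hi (mem_flatMap.2 ⟨_, hA, h'⟩)
  obtain ⟨B, rfl⟩ := exists_eq_cons_of_notMem_tail hjB fun h' ↦ hj (mem_flatMap.2 ⟨_, hB, h'⟩)
  have hAB : A ++ [i] ≠ j :: B := fun hAB ↦
    (hf i j hij).not_ge ((h.1 _ hB).2.le_of_mem_cons hf (hAB ▸ hiA))
  set rest := (L.erase (A ++ [i])).erase (j :: B)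
  have hperm : L ~ (A ++ [i]) :: (j :: B) :: rest :=
    (perm_cons_erase hA).trans ((perm_cons_erase ((mem_erase_of_ne hAB.symm).2 hB)).cons _)
  have hlinks : ((A ++ [i] ++ j :: B) :: rest).flatMap consecutivePairs ~
      (i, j) :: ((A ++ [i]) :: (j :: B) :: rest).flatMap consecutivePairs := by
    rw [flatMap_cons, consecutivePairs_concat_append_cons]
    simp only [flatMap_cons, append_assoc, cons_append]
    exact perm_middle
  refine ⟨_, (h.perm hperm).merge hij, by simp [hperm.length_eq], fun p hp ↦ ?_⟩
  rcases mem_cons.1 (hlinks.mem_iff.1 hp) with rfl | hp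
  · exact .inl rfl
  · exact .inr ((hperm.flatMap_right _).mem_iff.2 hp)

theorem IsLinkSet.exists_isChainCover [Fintype I] {β : Type*} [Preorder β] {f : I → β}
    (hf : ∀ a b, R a b → f a < f b) {E : Finset (I × I)} (hE : IsLinkSet R E) :
    ∃ L : List (List I), IsChainCover R L ∧ L.length + E.card = Fintype.card I ∧
      ∀ p ∈ L.flatMap consecutivePairs, p ∈ E := by
  classical
  induction E using Finset.induction_on with
  | empty => exact ⟨_, isChainCover_singletons, by simp, by simp⟩
  | insert p E hp ih =>
    obtain ⟨i, j⟩ := p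
    obtain ⟨L, hL, hlen, hsub⟩ := ih (hE.subset (Finset.subset_insert _ _))
    have hij := Finset.mem_insert_self (i, j) E
    have hi : i ∉ L.flatMap dropLast := by
      rw [← map_fst_flatMap_consecutivePairs]
      intro hi
      obtain ⟨x, hx, hxi⟩ := mem_map.1 hi
      exact hp (hE.2.1 _ (Finset.mem_insert_of_mem (hsub _ hx)) _ hij hxi ▸ hsub _ hx)
    have hj : j ∉ L.flatMap tail := by
      rw [← map_snd_flatMap_consecutivePairs]
      intro hj
      obtain ⟨x, hx, hxj⟩ := mem_map.1 hj
      exact hp (hE.2.2 _ (Finset.mem_insert_of_mem (hsub _ hx)) _ hij hxj ▸ hsub _ hx)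
    obtain ⟨L', hL', hlen', hsub'⟩ := hL.exists_merge hf (hE.1 _ hij) hi hj
    refine ⟨L', hL', by rw [Finset.card_insert_of_notMem hp]; omega, fun q hq ↦ ?_⟩
    rcases hsub' q hq with rfl | hq
    · exact hij
    · exact Finset.mem_insert_of_mem (hsub q hq)

end ChainCover

theorem minFleet_eq_card_sub_maxMatching_general {I : Type*} [Fintype I]
    (t : I → ℝ) (R : I → I → Prop) (hR : ∀ i j, R i j → t i < t j) :
    (∀ k : ℕ, 1 ≤ k → k ≤ Fintype.card I →
      ((∃ ch : Fin k → List I, IsChainPartition R k ch) ↔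
        (∃ E : Finset (I × I), IsLinkSet R E ∧ E.card = Fintype.card I - k))) ∧
    sInf {k : ℕ | ∃ ch : Fin k → List I, IsChainPartition R k ch}
      = Fintype.card I - sSup {m : ℕ | ∃ E : Finset (I × I), IsLinkSet R E ∧ E.card = m} := by
  classical
  refine ⟨fun k _ hk ↦ ?_, ?_⟩
  · rw [exists_isChainPartition_iff]
    constructor
    · rintro ⟨L, hL, rfl⟩
      exact ⟨_, hL.isLinkSet, by have := hL.card_links_add_length; omega⟩
    · rintro ⟨E, hE, hcard⟩
      obtain ⟨L, hL, hlen, -⟩ := hE.exists_isChainCover hR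
      exact ⟨L, hL, by omega⟩
  · set M := {m : ℕ | ∃ E : Finset (I × I), IsLinkSet R E ∧ E.card = m}
    have hbdd : BddAbove M := ⟨_, by rintro _ ⟨E, hE, rfl⟩; exact hE.card_le⟩
    obtain ⟨E, hE, hcard⟩ : sSup M ∈ M :=
      Nat.sSup_mem ⟨0, ∅, ⟨by simp, by simp, by simp⟩, rfl⟩ hbdd
    refine IsLeast.csInf_eq ⟨?_, fun k hk ↦ ?_⟩
    · obtain ⟨L, hL, hlen, -⟩ := hE.exists_isChainCover hR
      exact exists_isChainPartition_iff.2 ⟨L, hL, by omega⟩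
    · obtain ⟨L, hL, rfl⟩ := exists_isChainPartition_iff.1 hk
      have := le_csSup hbdd ⟨_, hL.isLinkSet, rfl⟩
      have := hL.card_links_add_length
      omega

/-- Correctness of the matching-based formulation of the minimum fleet size problem: for
`1 ≤ k ≤ |I|` a partition of the trips into `k` trip chains exists iff a link set of
cardinality `|I| - k` exists; hence the minimum fleet size equals `|I|` minus the maximum
cardinality of a link set. -/
theorem minFleet_eq_card_sub_maxMatching {I : Type*} [Fintype I] [Nonempty I]
    (t : I → ℝ) (R : I → I → Prop) (hR : ∀ i j, R i j → t i < t j) :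
    (∀ k : ℕ, 1 ≤ k → k ≤ Fintype.card I →
      ((∃ ch : Fin k → List I, IsChainPartition R k ch) ↔
        (∃ E : Finset (I × I), IsLinkSet R E ∧ E.card = Fintype.card I - k))) ∧
    sInf {k : ℕ | ∃ ch : Fin k → List I, IsChainPartition R k ch}
      = Fintype.card I - sSup {m : ℕ | ∃ E : Finset (I × I), IsLinkSet R E ∧ E.card = m} :=
  minFleet_eq_card_sub_maxMatching_general t R hR
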